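/- arXiv:2305.02228 — 3 statements merged into one kernel-verified Lean document; each statement's English description precedes it below -/
import Mathlib

section
/- Let q ≥ 2 be an integer and let γ = [[a,b],[c,d]] ∈ SL₂(ℤ) satisfy γ ≡ I (mod q) or γ ≡ -I (mod q). Then the trace of γ satisfies tr(γ) ≡ 2 (mod q²) or tr(γ) ≡ -2 (mod q²) respectively. -/
theorem stmt_0 (q : ℤ) (hq : 2 ≤ q) (γ : Matrix.SpecialLinearGroup (Fin 2) ℤ) :
    ((∀ i j, q ∣ ((γ : Matrix (Fin 2) (Fin 2) ℤ) i j - (1 : Matrix (Fin 2) (Fin 2) ℤ) i j)) →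
      q ^ 2 ∣ (Matrix.trace (γ : Matrix (Fin 2) (Fin 2) ℤ) - 2)) ∧
    ((∀ i j, q ∣ ((γ : Matrix (Fin 2) (Fin 2) ℤ) i j + (1 : Matrix (Fin 2) (Fin 2) ℤ) i j)) →
      q ^ 2 ∣ (Matrix.trace (γ : Matrix (Fin 2) (Fin 2) ℤ) + 2)) := by
  have hdet := γ.2
  rw [Matrix.det_fin_two] at hdet
  constructor
  · intro h
    obtain ⟨α, hα⟩ := h 0 0
    obtain ⟨δ, hδ⟩ := h 1 1
    obtain ⟨β, hβ⟩ := h 0 1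
    obtain ⟨c, hc⟩ := h 1 0
    simp [Matrix.one_apply] at hα hδ hβ hc
    rw [Matrix.trace_fin_two]
    refine ⟨β * c - α * δ, ?_⟩
    have e1 : (γ : Matrix (Fin 2) (Fin 2) ℤ) 0 0 = 1 + q * α := by linarith
    have e2 : (γ : Matrix (Fin 2) (Fin 2) ℤ) 1 1 = 1 + q * δ := by linarith
    rw [e1, e2, hβ, hc] at hdet
    ring_nf
    ring_nf at hdet
    nlinarith [hdet]
  · intro h
    obtain ⟨α, hα⟩ := h 0 0
    obtain ⟨δ, hδ⟩ := h 1 1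
    obtain ⟨β, hβ⟩ := h 0 1
    obtain ⟨c, hc⟩ := h 1 0
    simp [Matrix.one_apply] at hα hδ hβ hc
    rw [Matrix.trace_fin_two]
    refine ⟨α * δ - β * c, ?_⟩
    have e1 : (γ : Matrix (Fin 2) (Fin 2) ℤ) 0 0 = -1 + q * α := by linarith
    have e2 : (γ : Matrix (Fin 2) (Fin 2) ℤ) 1 1 = -1 + q * δ := by linarith
    rw [e1, e2, hβ, hc] at hdet
    ring_nf
    ring_nf at hdet
    nlinarith [hdet]
end

section
/- Let q ≥ 2 be an integer and let γ ∈ SL₂(ℤ) be a hyperbolic element (i.e. |tr(γ)| > 2) with γ ≡ I (mod q) or γ ≡ -I (mod q). Then the Frobenius norm of γ satisfies ‖γ‖ > q²/3. -/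
theorem stmt_1 (q : ℤ) (hq : 2 ≤ q) (γ : Matrix.SpecialLinearGroup (Fin 2) ℤ)
    (hhyp : 2 < |Matrix.trace (γ : Matrix (Fin 2) (Fin 2) ℤ)|)
    (hcong : (∀ i j, q ∣ ((γ : Matrix (Fin 2) (Fin 2) ℤ) i j - (1 : Matrix (Fin 2) (Fin 2) ℤ) i j)) ∨
      (∀ i j, q ∣ ((γ : Matrix (Fin 2) (Fin 2) ℤ) i j + (1 : Matrix (Fin 2) (Fin 2) ℤ) i j))) :
    Real.sqrt (∑ i, ∑ j, ((γ : Matrix (Fin 2) (Fin 2) ℤ) i j : ℝ) ^ 2) > (q : ℝ) ^ 2 / 3 := by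
  set M := (γ : Matrix (Fin 2) (Fin 2) ℤ) with hM
  set a := M 0 0
  set b := M 0 1
  set c := M 1 0
  set d := M 1 1
  have hdet : a * d - b * c = 1 := by
    have := γ.2
    rwa [Matrix.det_fin_two] at this
  have htr : Matrix.trace M = a + d := Matrix.trace_fin_two M
  rw [htr] at hhyp
  -- q^2 divides (a+d) - 2 or (a+d) + 2
  have hkey : q * q - 2 ≤ |a + d| := by
    have hdvd : q * q ∣ (a + d - 2) ∨ q * q ∣ (a + d + 2) := by
      rcases hcong with h | h
      · left
        have h1 : q ∣ a - 1 := by simpa using h 0 0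
        have h2 : q ∣ b := by simpa using h 0 1
        have h3 : q ∣ c := by simpa using h 1 0
        have h4 : q ∣ d - 1 := by simpa using h 1 1
        have heq : a + d - 2 = b * c - (a - 1) * (d - 1) := by linear_combination hdet
        rw [heq]
        exact dvd_sub (mul_dvd_mul h2 h3) (mul_dvd_mul h1 h4)
      · right
        have h1 : q ∣ a + 1 := by simpa using h 0 0
        have h2 : q ∣ b := by simpa using h 0 1
        have h3 : q ∣ c := by simpa using h 1 0
        have h4 : q ∣ d + 1 := by simpa using h 1 1
        have heq : a + d + 2 = (a + 1) * (d + 1) - b * c := by linear_combination -hdet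
        rw [heq]
        exact dvd_sub (mul_dvd_mul h1 h4) (mul_dvd_mul h2 h3)
    rcases hdvd with h | h
    · have hne : a + d - 2 ≠ 0 := by
        intro h0
        rw [show a + d = 2 by linarith] at hhyp
        norm_num at hhyp
      have := Int.le_of_dvd (abs_pos.mpr hne) ((dvd_abs _ _).mpr h)
      have h2 : |a + d - 2| ≤ |a + d| + 2 := by
        calc |a + d - 2| ≤ |a + d| + |(2 : ℤ)| := abs_sub _ _
        _ = |a + d| + 2 := by norm_num
      linarith
    · have hne : a + d + 2 ≠ 0 := by
        intro h0
        rw [show a + d = -2 by linarith] at hhyp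
        norm_num at hhyp
      have := Int.le_of_dvd (abs_pos.mpr hne) ((dvd_abs _ _).mpr h)
      have h2 : |a + d + 2| ≤ |a + d| + 2 := by
        calc |a + d + 2| ≤ |a + d| + |(2 : ℤ)| := abs_add_le _ _
        _ = |a + d| + 2 := by norm_num
      linarith
  -- main integer inequality
  have hq2 : (4 : ℤ) ≤ q * q := by nlinarith
  have hint : q ^ 4 < 9 * (a ^ 2 + b ^ 2 + c ^ 2 + d ^ 2) := by
    have hsq : (q * q - 2) ^ 2 ≤ (a + d) ^ 2 := by
      have h1 : 0 ≤ q * q - 2 := by linarith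
      have h2 := sq_abs (a + d)
      nlinarith [abs_nonneg (a + d)]
    nlinarith [sq_nonneg (a - d), sq_nonneg b, sq_nonneg c]
  -- pass to the reals
  rw [gt_iff_lt]
  have hS : ∑ i, ∑ j, ((M i j : ℝ)) ^ 2
      = (a : ℝ) ^ 2 + (b : ℝ) ^ 2 + (c : ℝ) ^ 2 + (d : ℝ) ^ 2 := by
    simp [Fin.sum_univ_two]; ring
  rw [hS, Real.lt_sqrt (by positivity)]
  have hR : (q : ℝ) ^ 4 < 9 * ((a : ℝ) ^ 2 + (b : ℝ) ^ 2 + (c : ℝ) ^ 2 + (d : ℝ) ^ 2) := by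
    exact_mod_cast hint
  nlinarith [hR]
end

section
/- Let p be an odd prime and γ ∈ SL₂(𝔽_p) with γ ≠ ±I. Then the number of lines in 𝔽_p² fixed by γ, minus 1, equals the Legendre symbol (tr(γ)² - 4 / p). -/
/-!
A line fixed by `γ` is spanned by an eigenvector, and since `γ ≠ ±1` has determinant `1` it is not
a scalar, so each of its eigenspaces in `𝔽_p²` is a line. Hence fixed lines correspond to
eigenvalues, i.e. to roots of `λ² - tλ + 1` with `t = tr γ`. As `p` is odd, `λ ↦ 2λ - t` matches
these roots with the square roots of `t² - 4`, of which there are `1 + (t² - 4 / p)`.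
-/

/-- The number of lines (1-dimensional subspaces) of `𝔽_p²` fixed by `γ`. -/
noncomputable def fixedLineCount (p : ℕ) [Fact p.Prime]
    (γ : Matrix.SpecialLinearGroup (Fin 2) (ZMod p)) : ℕ :=
  Nat.card {ℓ : Submodule (ZMod p) (Fin 2 → ZMod p) //
    Module.finrank (ZMod p) ℓ = 1 ∧
      ℓ.map (Matrix.mulVecLin (γ : Matrix (Fin 2) (Fin 2) (ZMod p))) = ℓ}

open Module

namespace Module.End

variable {K V : Type*} [Field K] [AddCommGroup V] [Module K V]

def FixedLine (f : End K V) : Type _ :=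
  {ℓ : Submodule K V // finrank K ℓ = 1 ∧ ℓ.map f = ℓ}

lemma map_eigenspace_of_ne_zero (f : End K V) {μ : K} (hμ : μ ≠ 0) :
    (f.eigenspace μ).map f = f.eigenspace μ := by
  refine le_antisymm ?_ fun v hv => ⟨μ⁻¹ • v, Submodule.smul_mem _ _ hv, ?_⟩
  · rintro _ ⟨v, hv, rfl⟩
    rw [SetLike.mem_coe, mem_eigenspace_iff] at hv
    rw [mem_eigenspace_iff, hv, map_smul, hv]
  · rw [map_smul, mem_eigenspace_iff.1 hv, smul_smul, inv_mul_cancel₀ hμ, one_smul]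

lemma HasEigenvalue.eq_of_eigenspace_eq {f : End K V} {μ ν : K} (hμ : f.HasEigenvalue μ)
    (h : f.eigenspace μ = f.eigenspace ν) : μ = ν := by
  obtain ⟨v, hvμ, hv0⟩ := hμ.exists_hasEigenvector
  have hvν : f v = ν • v := mem_eigenspace_iff.1 (h ▸ hvμ)
  exact smul_left_injective K hv0 ((mem_eigenspace_iff.1 hvμ).symm.trans hvν)

lemma exists_hasEigenvalue_eigenspace_eq_of_map_le {f : End K V}
    (hf : ∀ μ, f.HasEigenvalue μ → finrank K (f.eigenspace μ) = 1)
    {ℓ : Submodule K V} (hℓ : finrank K ℓ = 1) (hfix : ℓ.map f ≤ ℓ) :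
    ∃ μ, f.HasEigenvalue μ ∧ f.eigenspace μ = ℓ := by
  obtain ⟨⟨v, hvℓ⟩, hv0, -⟩ := finrank_eq_one_iff'.1 hℓ
  replace hv0 : v ≠ 0 := fun h => hv0 (Subtype.ext h)
  have hspan := eq_span_singleton_of_mem_of_finrank_eq_one hℓ hvℓ hv0
  obtain ⟨μ, hμ⟩ := Submodule.mem_span_singleton.1 (hspan ▸ hfix ⟨v, hvℓ, rfl⟩)
  have hv : f.HasEigenvector μ v := ⟨mem_eigenspace_iff.2 hμ.symm, hv0⟩
  have hμ' := hasEigenvalue_of_hasEigenvector hv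
  exact ⟨μ, hμ', (eq_span_singleton_of_mem_of_finrank_eq_one (hf μ hμ') hv.1 hv0).trans hspan.symm⟩

theorem card_fixedLine_eq_card_eigenvalues (f : End K V) (hinj : Function.Injective f)
    (hf : ∀ μ, f.HasEigenvalue μ → finrank K (f.eigenspace μ) = 1) :
    Nat.card f.FixedLine = Nat.card {μ // f.HasEigenvalue μ} := by
  have hne : ∀ μ, f.HasEigenvalue μ → μ ≠ 0 := by
    rintro _ hμ rfl
    exact hasEigenvalue_iff.1 hμ (by rw [eigenspace_zero, LinearMap.ker_eq_bot.2 hinj])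
  refine (Nat.card_eq_of_bijective (fun μ : {μ // f.HasEigenvalue μ} =>
    (⟨f.eigenspace μ, hf μ μ.2, f.map_eigenspace_of_ne_zero (hne μ μ.2)⟩ : f.FixedLine))
    ⟨fun μ ν h => Subtype.ext (μ.2.eq_of_eigenspace_eq (congrArg Subtype.val h)), ?_⟩).symm
  rintro ⟨ℓ, hℓ, hfix⟩
  obtain ⟨μ, hμ, rfl⟩ := exists_hasEigenvalue_eigenspace_eq_of_map_le hf hℓ hfix.le
  exact ⟨⟨μ, hμ⟩, rfl⟩

lemma finrank_eigenspace_eq_one_of_finrank_eq_two (hV : finrank K V = 2) {f : End K V}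
    (hf : ∀ c : K, f ≠ c • 1) {μ : K} (hμ : f.HasEigenvalue μ) :
    finrank K (f.eigenspace μ) = 1 := by
  have : FiniteDimensional K V := Module.finite_of_finrank_pos (by omega)
  have hne_top : f.eigenspace μ ≠ ⊤ := fun h =>
    hf μ (sub_eq_zero.1 (LinearMap.ker_eq_top.1 (eigenspace_def.symm.trans h)))
  have hlt := Submodule.finrank_lt hne_top
  have hpos : finrank K (f.eigenspace μ) ≠ 0 :=
    fun h => hasEigenvalue_iff.1 hμ (Submodule.finrank_eq_zero.1 h)
  omega

end Module.End

lemma Matrix.hasEigenvalue_mulVecLin_iff_fin_two {R : Type*} [CommRing R] [IsDomain R]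
    (M : Matrix (Fin 2) (Fin 2) R) (μ : R) :
    End.HasEigenvalue M.mulVecLin μ ↔ μ ^ 2 - M.trace * μ + M.det = 0 := by
  simp [End.hasEigenvalue_iff_isRoot_charpoly, Matrix.charpoly_fin_two]

lemma Matrix.SpecialLinearGroup.mulVecLin_ne_smul_one {K : Type*} [Field K]
    {γ : Matrix.SpecialLinearGroup (Fin 2) K} (h1 : γ ≠ 1) (h2 : γ ≠ -1) (c : K) :
    (γ : Matrix (Fin 2) (Fin 2) K).mulVecLin ≠ c • 1 := by
  intro h
  have hγ : (γ : Matrix (Fin 2) (Fin 2) K) = c • 1 := by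
    apply Matrix.toLin'.injective
    rw [Matrix.toLin'_apply', h, map_smul, Matrix.toLin'_one, Module.End.one_eq_id]
  have hc : c ^ 2 = 1 := by simpa [hγ] using γ.det_coe
  rcases sq_eq_one_iff.1 hc with rfl | rfl
  · exact h1 (Subtype.ext (by simpa using hγ))
  · exact h2 (Subtype.ext (by simpa using hγ))

lemma Matrix.SpecialLinearGroup.mulVecLin_injective {n R : Type*} [DecidableEq n] [Fintype n]
    [CommRing R] (γ : Matrix.SpecialLinearGroup n R) :
    Function.Injective (γ : Matrix n n R).mulVecLin := by
  rw [← Matrix.toLin'_apply', ← Matrix.SpecialLinearGroup.toLin'_to_linearMap]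
  exact (Matrix.SpecialLinearGroup.toLin' γ).injective

lemma card_roots_quadratic_eq_card_sqrts {F : Type*} [Field F] (h2 : (2 : F) ≠ 0) (b c : F) :
    Nat.card {x : F // x ^ 2 - b * x + c = 0} = Nat.card {y : F // y ^ 2 = b ^ 2 - 4 * c} := by
  refine Nat.card_congr (((Equiv.mulLeft₀ 2 h2).trans (Equiv.subRight b)).subtypeEquiv fun x => ?_)
  have h4 : (4 : F) ≠ 0 := by simpa [show (4 : F) = 2 * 2 by norm_num] using h2
  simp only [Equiv.trans_apply, Equiv.mulLeft₀_apply, Equiv.subRight_apply]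
  rw [← sub_eq_zero, ← mul_eq_zero_iff_left h4]
  constructor <;> intro h <;> linear_combination h

lemma card_sqrts_eq_legendreSym_add_one {p : ℕ} [Fact p.Prime] (hp : p ≠ 2) (a : ZMod p) :
    (Nat.card {y : ZMod p // y ^ 2 = a} : ℤ) = legendreSym p a.val + 1 := by
  have := legendreSym.card_sqrts (p := p) hp a.val
  rw [Int.cast_natCast, ZMod.natCast_zmod_val] at this
  rw [← this, ← Nat.card_eq_card_toFinset, Set.coe_ofPred]

theorem stmt_5 (p : ℕ) [Fact p.Prime] (hp : p ≠ 2)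
    (γ : Matrix.SpecialLinearGroup (Fin 2) (ZMod p)) (h1 : γ ≠ 1) (h2 : γ ≠ -1) :
    (fixedLineCount p γ : ℤ) - 1 =
      legendreSym p (((Matrix.trace (γ : Matrix (Fin 2) (Fin 2) (ZMod p)) ^ 2 - 4 : ZMod p)).val) := by
  set M := (γ : Matrix (Fin 2) (Fin 2) (ZMod p))
  have htwo : (2 : ZMod p) ≠ 0 := Ring.two_ne_zero (by rwa [ZMod.ringChar_zmod_n])
  have hlines : fixedLineCount p γ = Nat.card {μ // End.HasEigenvalue M.mulVecLin μ} :=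
    End.card_fixedLine_eq_card_eigenvalues M.mulVecLin γ.mulVecLin_injective fun _ =>
      End.finrank_eigenspace_eq_one_of_finrank_eq_two (by simp)
        (Matrix.SpecialLinearGroup.mulVecLin_ne_smul_one h1 h2)
  have heig : Nat.card {μ // End.HasEigenvalue M.mulVecLin μ} =
      Nat.card {μ : ZMod p // μ ^ 2 - M.trace * μ + 1 = 0} := by
    refine Nat.card_congr (Equiv.subtypeEquivRight fun μ => ?_)
    rw [M.hasEigenvalue_mulVecLin_iff_fin_two, γ.det_coe]
  rw [hlines, heig, card_roots_quadratic_eq_card_sqrts htwo, mul_one,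
    card_sqrts_eq_legendreSym_add_one hp, add_sub_cancel_right]
end
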